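/- For a max-plus IFS whose weights q_j do not depend on x, set J₀ = { j ∈ J : q_j = 0 }. Then the Aubry set equals π(J₀^ℕ), the image of the infinite words over J₀ under the coding map π. -/

import Mathlib

open Filter Topology

/-- Apply the maps of a word: `applyWord φ [j₁,…,jₙ] x = φ_{j₁}(⋯(φ_{jₙ}(x)))`. -/
def applyWord {J X : Type*} (φ : J → X → X) : List J → X → X
  | [], x => x
  | j :: w, x => φ j (applyWord φ w x)

/-- Birkhoff-like sum of weights along a word:
`Sum((j₁,…,jₙ),x) = q_{j₁}(φ_{j₂}∘⋯∘φ_{jₙ}(x)) + ⋯ + q_{jₙ}(x)`. -/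
def sumWord {J X : Type*} (φ : J → X → X) (q : J → X → ℝ) : List J → X → ℝ
  | [], _ => 0
  | j :: w, x => q j (applyWord φ w x) + sumWord φ q w x

/-- `S_ε(x,y)`: the sup of `Sum(ω,y)` over nonempty words ω with `d(x,φ_ω(y)) < ε`. -/
noncomputable def Seps {J X : Type*} [MetricSpace X] (φ : J → X → X) (q : J → X → ℝ)
    (ε : ℝ) (x y : X) : EReal :=
  ⨆ (ω : List J) (_ : ω ≠ [] ∧ dist x (applyWord φ ω y) < ε),
    ((sumWord φ q ω y : ℝ) : EReal)

/-- The Mañé potential `S(x,y) = lim_{ε→0} S_ε(x,y) = inf_{ε>0} S_ε(x,y)`. -/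
noncomputable def manePot {J X : Type*} [MetricSpace X] (φ : J → X → X) (q : J → X → ℝ)
    (x y : X) : EReal :=
  ⨅ (ε : ℝ) (_ : 0 < ε), Seps φ q ε x y

lemma applyWord_append {J X : Type*} (φ : J → X → X) (w₁ w₂ : List J) (x : X) :
    applyWord φ (w₁ ++ w₂) x = applyWord φ w₁ (applyWord φ w₂ x) := by
  induction w₁ with
  | nil => rfl
  | cons j w ih => simp [applyWord, ih]

lemma sumWord_const {J X : Type*} (φ : J → X → X) (q : J → ℝ) (w : List J) (x : X) :
    sumWord φ (fun j _ => q j) w x = (w.map q).sum := by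
  induction w with
  | nil => rfl
  | cons j w ih => simp [sumWord, ih]

lemma list_sum_nonpos {J : Type*} {q : J → ℝ} (hq : ∀ j, q j ≤ 0) :
    ∀ w : List J, (w.map q).sum ≤ 0
  | [] => by simp
  | j :: w => by
      simp only [List.map_cons, List.sum_cons]
      have := list_sum_nonpos hq w
      have := hq j
      linarith

lemma list_sum_le_of_mem {J : Type*} {q : J → ℝ} (hq : ∀ j, q j ≤ 0) :
    ∀ {w : List J} {j : J}, j ∈ w → (w.map q).sum ≤ q j := by
  intro w
  induction w with
  | nil => intro j h; simp at h
  | cons a t ih =>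
    intro j hj
    simp only [List.map_cons, List.sum_cons]
    rcases List.mem_cons.mp hj with rfl | hj
    · have := list_sum_nonpos hq t; linarith
    · have := ih hj; have := hq a; linarith

lemma dist_applyWord_le {J X : Type*} [MetricSpace J] [MetricSpace X]
    {γ : ℝ} (hγ0 : 0 < γ)
    (φ : J → X → X)
    (hφ : ∀ j₁ j₂ x₁ x₂, dist (φ j₁ x₁) (φ j₂ x₂) ≤ γ * (dist j₁ j₂ + dist x₁ x₂))
    (w : List J) (x y : X) :
    dist (applyWord φ w x) (applyWord φ w y) ≤ γ ^ w.length * dist x y := by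
  induction w with
  | nil => simp [applyWord]
  | cons j w ih =>
    calc dist (applyWord φ (j :: w) x) (applyWord φ (j :: w) y)
        ≤ γ * (dist j j + dist (applyWord φ w x) (applyWord φ w y)) := hφ _ _ _ _
      _ = γ * dist (applyWord φ w x) (applyWord φ w y) := by simp
      _ ≤ γ * (γ ^ w.length * dist x y) := mul_le_mul_of_nonneg_left ih hγ0.le
      _ = γ ^ (j :: w).length * dist x y := by
          rw [List.length_cons, pow_succ]; ring

lemma dist_applyWord_forall2 {J X : Type*} [MetricSpace J] [MetricSpace X]
    {γ η : ℝ} (hγ0 : 0 < γ) (hγ1 : γ < 1) (hη : 0 ≤ η)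
    (φ : J → X → X)
    (hφ : ∀ j₁ j₂ x₁ x₂, dist (φ j₁ x₁) (φ j₂ x₂) ≤ γ * (dist j₁ j₂ + dist x₁ x₂))
    {w w' : List J}
    (h : List.Forall₂ (fun a b => dist a b ≤ η) w w') (x : X) :
    dist (applyWord φ w x) (applyWord φ w' x) ≤ γ * η / (1 - γ) := by
  have h1γ : (0:ℝ) < 1 - γ := by linarith
  induction h with
  | nil => simp [applyWord]; positivity
  | cons hab htl ih =>
    rename_i a b l₁ l₂
    have key : γ * (η + γ * η / (1 - γ)) = γ * η / (1 - γ) := by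
      rw [eq_div_iff h1γ.ne']
      field_simp
      ring
    calc dist (applyWord φ (a :: l₁) x) (applyWord φ (b :: l₂) x)
        ≤ γ * (dist a b + dist (applyWord φ l₁ x) (applyWord φ l₂ x)) := hφ _ _ _ _
      _ ≤ γ * (η + γ * η / (1 - γ)) := by gcongr
      _ = γ * η / (1 - γ) := key

lemma pi_shift {J X : Type*} [MetricSpace J] [MetricSpace X] [Nonempty X]
    {γ : ℝ} (hγ0 : 0 < γ)
    (φ : J → X → X)
    (hφ : ∀ j₁ j₂ x₁ x₂, dist (φ j₁ x₁) (φ j₂ x₂) ≤ γ * (dist j₁ j₂ + dist x₁ x₂))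
    (π : (ℕ → J) → X)
    (hπ : ∀ (ω : ℕ → J) (x : X),
      Tendsto (fun n => applyWord φ (List.ofFn fun i : Fin n => ω i) x) atTop (𝓝 (π ω)))
    (ω : ℕ → J) (n : ℕ) :
    π ω = applyWord φ (List.ofFn fun i : Fin n => ω ↑i) (π fun k => ω (n + k)) := by
  obtain ⟨x⟩ := ‹Nonempty X›
  set w := List.ofFn fun i : Fin n => ω ↑i with hw
  have hlip : LipschitzWith (γ ^ w.length).toNNReal (applyWord φ w) := by
    apply LipschitzWith.of_dist_le_mul
    intro a b
    rw [Real.coe_toNNReal _ (by positivity)]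
    exact dist_applyWord_le hγ0 φ hφ w a b
  have h1 : Tendsto
      (fun m => applyWord φ w (applyWord φ (List.ofFn fun i : Fin m => ω (n + ↑i)) x))
      atTop (𝓝 (applyWord φ w (π fun k => ω (n + k)))) :=
    (hlip.continuous.tendsto _).comp (hπ (fun k => ω (n + k)) x)
  have h2 : ∀ m, applyWord φ w (applyWord φ (List.ofFn fun i : Fin m => ω (n + ↑i)) x)
      = applyWord φ (List.ofFn fun i : Fin (n + m) => ω ↑i) x := by
    intro m
    rw [← applyWord_append, List.ofFn_add]
    simp [hw]
  simp only [h2] at h1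
  have hmono : Tendsto (fun m : ℕ => n + m) atTop atTop := by
    simpa [add_comm] using tendsto_add_atTop_nat n
  have h3 : Tendsto (fun m => applyWord φ (List.ofFn fun i : Fin (n + m) => ω ↑i) x)
      atTop (𝓝 (π ω)) := (hπ ω x).comp hmono
  exact tendsto_nhds_unique h3 h1

lemma pi_dist {J X : Type*} [MetricSpace J] [MetricSpace X] [Nonempty X] [CompactSpace X]
    {γ : ℝ} (hγ0 : 0 < γ) (hγ1 : γ < 1)
    (φ : J → X → X)
    (hφ : ∀ j₁ j₂ x₁ x₂, dist (φ j₁ x₁) (φ j₂ x₂) ≤ γ * (dist j₁ j₂ + dist x₁ x₂))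
    (π : (ℕ → J) → X)
    (hπ : ∀ (ω : ℕ → J) (x : X),
      Tendsto (fun n => applyWord φ (List.ofFn fun i : Fin n => ω i) x) atTop (𝓝 (π ω)))
    (n : ℕ) :
    ∀ ω ω' : ℕ → J, dist (π ω) (π ω') ≤ γ ^ n * Metric.diam (Set.univ : Set X)
      + γ * ∑ i ∈ Finset.range n, dist (ω i) (ω' i) := by
  induction n with
  | zero =>
    intro ω ω'
    simpa using Metric.dist_le_diam_of_mem isCompact_univ.isBounded
      (Set.mem_univ (π ω)) (Set.mem_univ (π ω'))
  | succ n ih =>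
    intro ω ω'
    have e1 : π ω = φ (ω 0) (π fun k => ω (1 + k)) := by
      have h := pi_shift hγ0 φ hφ π hπ ω 1
      simpa [applyWord, List.ofFn_succ] using h
    have e2 : π ω' = φ (ω' 0) (π fun k => ω' (1 + k)) := by
      have h := pi_shift hγ0 φ hφ π hπ ω' 1
      simpa [applyWord, List.ofFn_succ] using h
    have hih := ih (fun k => ω (1 + k)) (fun k => ω' (1 + k))
    have hsum : ∑ i ∈ Finset.range (n + 1), dist (ω i) (ω' i)
        = (∑ i ∈ Finset.range n, dist (ω (1 + i)) (ω' (1 + i))) + dist (ω 0) (ω' 0) := by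
      rw [Finset.sum_range_succ']
      congr 1
      apply Finset.sum_congr rfl
      intro i _
      rw [Nat.add_comm i 1]
    have hd0 : (0:ℝ) ≤ dist (ω 0) (ω' 0) := dist_nonneg
    have hsnn : (0:ℝ) ≤ ∑ i ∈ Finset.range n, dist (ω (1 + i)) (ω' (1 + i)) :=
      Finset.sum_nonneg fun _ _ => dist_nonneg
    have hD : (0:ℝ) ≤ Metric.diam (Set.univ : Set X) := Metric.diam_nonneg
    have hpow : γ ^ (n + 1) = γ * γ ^ n := by rw [pow_succ]; ring
    calc dist (π ω) (π ω')
        = dist (φ (ω 0) (π fun k => ω (1 + k))) (φ (ω' 0) (π fun k => ω' (1 + k))) := by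
          rw [← e1, ← e2]
      _ ≤ γ * (dist (ω 0) (ω' 0)
            + dist (π fun k => ω (1 + k)) (π fun k => ω' (1 + k))) := hφ _ _ _ _
      _ ≤ γ ^ (n + 1) * Metric.diam (Set.univ : Set X)
            + γ * ∑ i ∈ Finset.range (n + 1), dist (ω i) (ω' i) := by
          rw [hsum, hpow]
          nlinarith [mul_le_mul_of_nonneg_left hih hγ0.le,
            mul_nonneg hγ0.le hsnn]

lemma pi_continuous {J X : Type*} [MetricSpace J] [MetricSpace X] [Nonempty X] [CompactSpace X]
    {γ : ℝ} (hγ0 : 0 < γ) (hγ1 : γ < 1)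
    (φ : J → X → X)
    (hφ : ∀ j₁ j₂ x₁ x₂, dist (φ j₁ x₁) (φ j₂ x₂) ≤ γ * (dist j₁ j₂ + dist x₁ x₂))
    (π : (ℕ → J) → X)
    (hπ : ∀ (ω : ℕ → J) (x : X),
      Tendsto (fun n => applyWord φ (List.ofFn fun i : Fin n => ω i) x) atTop (𝓝 (π ω))) :
    Continuous π := by
  set D := Metric.diam (Set.univ : Set X) with hDdef
  have hD : 0 ≤ D := Metric.diam_nonneg
  rw [continuous_iff_continuousAt]
  intro ω
  rw [ContinuousAt, Metric.tendsto_nhds]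
  intro ε hε
  obtain ⟨n, hn⟩ : ∃ n, γ ^ n * D < ε / 2 := by
    have h0 := (tendsto_pow_atTop_nhds_zero_of_lt_one hγ0.le hγ1).mul_const D
    rw [zero_mul] at h0
    exact (h0.eventually (gt_mem_nhds (by linarith : (0:ℝ) < ε / 2))).exists
  set δ := ε / (2 * ((n : ℝ) + 1)) with hδdef
  have hδpos : 0 < δ := by positivity
  have hU : {ω' : ℕ → J | ∀ i ∈ Finset.range n, dist (ω' i) (ω i) < δ} ∈ 𝓝 ω := by
    have hopen : IsOpen {ω' : ℕ → J | ∀ i ∈ Finset.range n, dist (ω' i) (ω i) < δ} := by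
      have he : {ω' : ℕ → J | ∀ i ∈ Finset.range n, dist (ω' i) (ω i) < δ}
          = ⋂ i ∈ Finset.range n, {ω' : ℕ → J | dist (ω' i) (ω i) < δ} := by
        ext ω'; simp
      rw [he]
      exact isOpen_biInter_finset fun i _ =>
        isOpen_lt ((continuous_apply i).dist continuous_const) continuous_const
    exact hopen.mem_nhds (by simp [hδpos])
  filter_upwards [hU] with ω' hω'
  have hb := pi_dist hγ0 hγ1 φ hφ π hπ n ω' ω
  have hsnn : (0:ℝ) ≤ ∑ i ∈ Finset.range n, dist (ω' i) (ω i) :=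
    Finset.sum_nonneg fun _ _ => dist_nonneg
  have hsum : ∑ i ∈ Finset.range n, dist (ω' i) (ω i) ≤ n * δ := by
    calc ∑ i ∈ Finset.range n, dist (ω' i) (ω i)
        ≤ ∑ _i ∈ Finset.range n, δ := Finset.sum_le_sum fun i hi => (hω' i hi).le
      _ = n * δ := by simp [Finset.sum_const, Finset.card_range, mul_comm]
  have hnδ : (n : ℝ) * δ < ε / 2 := by
    rw [hδdef, mul_div_assoc']
    rw [div_lt_div_iff₀ (by positivity) (by norm_num)]
    nlinarith [hε]
  have hγs : γ * ∑ i ∈ Finset.range n, dist (ω' i) (ω i)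
      ≤ ∑ i ∈ Finset.range n, dist (ω' i) (ω i) :=
    mul_le_of_le_one_left hsnn hγ1.le
  calc dist (π ω') (π ω)
      ≤ γ ^ n * D + γ * ∑ i ∈ Finset.range n, dist (ω' i) (ω i) := hb
    _ ≤ γ ^ n * D + ∑ i ∈ Finset.range n, dist (ω' i) (ω i) := by linarith
    _ ≤ γ ^ n * D + n * δ := by linarith
    _ < ε / 2 + ε / 2 := add_lt_add hn hnδ
    _ = ε := by ring


/-- For a max-plus IFS with place-independent weights, the Aubry set equals the image
under the coding map π of the infinite words over J₀ = {j : q_j = 0}. -/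
theorem aubry_eq_image_of_J0_words {J X : Type*} [MetricSpace J] [MetricSpace X]
    [CompactSpace J] [CompactSpace X] [Nonempty J] [Nonempty X]
    {γ : ℝ} (hγ0 : 0 < γ) (hγ1 : γ < 1)
    (φ : J → X → X)
    (hφ : ∀ j₁ j₂ x₁ x₂, dist (φ j₁ x₁) (φ j₂ x₂) ≤ γ * (dist j₁ j₂ + dist x₁ x₂))
    (q : J → ℝ) (hqc : Continuous q) (hqn : (⨆ j : J, q j) = 0)
    (π : (ℕ → J) → X)
    (hπ : ∀ (ω : ℕ → J) (x : X),
      Filter.Tendsto (fun n => applyWord φ (List.ofFn fun i : Fin n => ω i) x)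
        Filter.atTop (nhds (π ω))) :
    {x : X | manePot φ (fun j _ => q j) x x = 0} =
      π '' {ω : ℕ → J | ∀ n, q (ω n) = 0} := by
  classical
  have h1γ : (0:ℝ) < 1 - γ := by linarith
  have hbdd : BddAbove (Set.range q) := (isCompact_range hqc).bddAbove
  have hqle : ∀ j, q j ≤ 0 := fun j => by
    have := le_ciSup hbdd j; rwa [hqn] at this
  ext x
  simp only [Set.mem_setOf_eq, Set.mem_image]
  constructor
  · -- Aubry point ⇒ in π(J₀^ℕ)
    intro hx
    set S : Set (ℕ → J) := {ω | ∀ n, q (ω n) = 0} with hSdef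
    have hScl : IsClosed S := by
      have he : S = ⋂ n, (fun ω : ℕ → J => q (ω n)) ⁻¹' {0} := by
        ext ω; simp [hSdef]
      rw [he]
      exact isClosed_iInter fun n =>
        IsClosed.preimage (hqc.comp (continuous_apply n)) isClosed_singleton
    have hπc : Continuous π := pi_continuous hγ0 hγ1 φ hφ π hπ
    have hKcl : IsClosed (π '' S) := (hScl.isCompact.image hπc).isClosed
    suffices hcl : x ∈ closure (π '' S) by
      rw [hKcl.closure_eq] at hcl
      obtain ⟨ω, hω, hπω⟩ := hcl
      exact ⟨ω, hω, hπω⟩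
    rw [Metric.mem_closure_iff]
    intro ε hε
    set r := (1 - γ) * ε / 2 with hrdef
    have hrpos : 0 < r := by positivity
    -- choose η
    set η := (1 - γ) * r / (4 * γ) with hηdef
    have hηpos : 0 < η := by positivity
    have hηsmall : γ * η / (1 - γ) < r / 2 := by
      have : γ * η / (1 - γ) = r / 4 := by
        rw [hηdef]; field_simp
      rw [this]; linarith
    -- choose δ by compactness
    obtain ⟨δ, hδpos, hδ⟩ : ∃ δ > 0, ∀ j : J, -δ < q j →
        ∃ j', q j' = 0 ∧ dist j j' < η := by
      set A : Set J := {j | ∀ j', q j' = 0 → η ≤ dist j j'} with hAdef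
      have hAcl : IsClosed A := by
        have he : A = ⋂ j' ∈ {j' : J | q j' = 0}, {j : J | η ≤ dist j j'} := by
          ext j; simp [hAdef]
        rw [he]
        exact isClosed_biInter fun j' _ =>
          isClosed_le continuous_const (continuous_id.dist continuous_const)
      rcases A.eq_empty_or_nonempty with hA | hA
      · refine ⟨1, one_pos, fun j _ => ?_⟩
        by_contra hcon
        push_neg at hcon
        have hjA : j ∈ A := fun j' hj' => hcon j' hj'
        rw [hA] at hjA
        exact hjA
      · obtain ⟨j₀, hj₀A, hj₀max⟩ := hAcl.isCompact.exists_isMaxOn hA hqc.continuousOn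
        have hq0 : q j₀ < 0 := by
          rcases lt_or_eq_of_le (hqle j₀) with h | h
          · exact h
          · have := hj₀A j₀ h
            simp only [dist_self] at this
            linarith
        refine ⟨-q j₀, by linarith, fun j hj => ?_⟩
        by_contra hcon
        push_neg at hcon
        have hjA : j ∈ A := fun j' hj' => hcon j' hj'
        have hle := hj₀max hjA
        simp only [Set.mem_setOf_eq] at hle
        have : q j₀ < q j := by linarith
        exact absurd hle (not_le.mpr this)
    -- extract a word from S(x,x) = 0
    have hSle : manePot φ (fun j _ => q j) x x ≤ Seps φ (fun j _ => q j) (r / 2) x x :=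
      iInf₂_le (r / 2) (by positivity)
    rw [hx] at hSle
    obtain ⟨w, ⟨hwne, hwdist⟩, hwsum⟩ :
        ∃ w : List J, (w ≠ [] ∧ dist x (applyWord φ w x) < r / 2) ∧
          -δ < sumWord φ (fun j _ => q j) w x := by
      by_contra hcon
      push_neg at hcon
      have hsup : Seps φ (fun j _ => q j) (r / 2) x x ≤ ((-δ : ℝ) : EReal) := by
        apply iSup₂_le
        intro w hw
        exact_mod_cast hcon w hw
      have h0 : ((0 : ℝ) : EReal) ≤ ((-δ : ℝ) : EReal) := by
        refine le_trans ?_ hsup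
        exact_mod_cast hSle
      rw [EReal.coe_le_coe_iff] at h0
      linarith
    have hletters : ∀ j ∈ w, -δ < q j := by
      intro j hj
      have h1 : sumWord φ (fun j _ => q j) w x ≤ q j := by
        rw [sumWord_const]; exact list_sum_le_of_mem hqle hj
      linarith
    -- replace letters by nearby letters in J₀
    set f : J → J := fun j =>
      if h : ∃ j', q j' = 0 ∧ dist j j' < η then h.choose else j with hfdef
    have hfprop : ∀ j ∈ w, q (f j) = 0 ∧ dist j (f j) < η := by
      intro j hj
      have hex := hδ j (hletters j hj)
      simp only [hfdef, dif_pos hex]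
      exact ⟨hex.choose_spec.1, hex.choose_spec.2⟩
    set w' := w.map f with hw'def
    have hw'ne : w' ≠ [] := by
      simpa [hw'def] using hwne
    have hw'J0 : ∀ j ∈ w', q j = 0 := by
      intro j hj
      rw [hw'def, List.mem_map] at hj
      obtain ⟨a, ha, rfl⟩ := hj
      exact (hfprop a ha).1
    have hfa2 : List.Forall₂ (fun a b => dist a b ≤ η) w w' := by
      rw [hw'def, List.forall₂_map_right_iff]
      rw [List.forall₂_same]
      intro a ha
      exact (hfprop a ha).2.le
    have hdist' : dist x (applyWord φ w' x) < r := by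
      calc dist x (applyWord φ w' x)
          ≤ dist x (applyWord φ w x) + dist (applyWord φ w x) (applyWord φ w' x) :=
            dist_triangle _ _ _
        _ < r / 2 + r / 2 := by
            apply add_lt_add_of_lt_of_le hwdist
            exact le_of_lt (lt_of_le_of_lt
              (dist_applyWord_forall2 hγ0 hγ1 hηpos.le φ hφ hfa2 x) hηsmall)
        _ = r := by ring
    -- periodic word
    have hL : 0 < w'.length := List.length_pos_iff.mpr hw'ne
    set ω : ℕ → J := fun m => w'.get ⟨m % w'.length, Nat.mod_lt m hL⟩ with hωdef
    have hωS : ω ∈ S := by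
      intro m
      exact hw'J0 _ (w'.get_mem _)
    have hfix : π ω = applyWord φ w' (π ω) := by
      have h1 := pi_shift hγ0 φ hφ π hπ ω w'.length
      have h2 : (List.ofFn fun i : Fin w'.length => ω ↑i) = w' := by
        conv_rhs => rw [← List.ofFn_get w']
        congr 1
        funext i
        simp [hωdef, Nat.mod_eq_of_lt i.isLt]
      have h3 : (fun k => ω (w'.length + k)) = ω := by
        funext k
        simp [hωdef, Nat.add_mod_left]
      rw [h2, h3] at h1
      exact h1
    have hcontr : dist (applyWord φ w' x) (applyWord φ w' (π ω)) ≤ γ * dist x (π ω) := by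
      calc dist (applyWord φ w' x) (applyWord φ w' (π ω))
          ≤ γ ^ w'.length * dist x (π ω) := dist_applyWord_le hγ0 φ hφ w' x (π ω)
        _ ≤ γ * dist x (π ω) := by
            apply mul_le_mul_of_nonneg_right _ dist_nonneg
            exact pow_le_of_le_one hγ0.le hγ1.le hL.ne'
    have hfinal : dist x (π ω) ≤ r / (1 - γ) := by
      have htri : dist x (π ω) ≤ dist x (applyWord φ w' x)
          + dist (applyWord φ w' x) (π ω) := dist_triangle _ _ _
      have heq : dist (applyWord φ w' x) (π ω)
          = dist (applyWord φ w' x) (applyWord φ w' (π ω)) := by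
        conv_lhs => rw [hfix]
      rw [heq] at htri
      have : dist x (π ω) ≤ r + γ * dist x (π ω) := by
        have := hdist'.le
        linarith [hcontr, htri]
      rw [le_div_iff₀ h1γ]
      linarith
    refine ⟨π ω, ⟨ω, hωS, rfl⟩, ?_⟩
    have : r / (1 - γ) = ε / 2 := by
      rw [hrdef]; field_simp
    calc dist x (π ω) ≤ r / (1 - γ) := hfinal
      _ = ε / 2 := this
      _ < ε := by linarith
  · -- points of π(J₀^ℕ) are Aubry
    rintro ⟨ω, hω, rfl⟩
    have hS : ∀ ε > (0:ℝ), Seps φ (fun j _ => q j) ε (π ω) (π ω) = 0 := by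
      intro ε hε
      apply le_antisymm
      · apply iSup₂_le
        intro w _
        rw [sumWord_const]
        exact_mod_cast list_sum_nonpos hqle w
      · obtain ⟨N, hN⟩ := (Metric.tendsto_atTop.mp (hπ ω (π ω))) ε hε
        set w := List.ofFn fun i : Fin (N + 1) => ω ↑i with hwdef
        have hw1 : w ≠ [] := by
          simp [hwdef, List.ofFn_succ]
        have hw2 : dist (π ω) (applyWord φ w (π ω)) < ε := by
          rw [dist_comm]
          exact hN (N + 1) (Nat.le_succ N)
        have hsum : sumWord φ (fun j _ => q j) w (π ω) = 0 := by
          rw [sumWord_const]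
          apply List.sum_eq_zero
          intro r hr
          rw [List.mem_map] at hr
          obtain ⟨a, ha, rfl⟩ := hr
          rw [List.mem_ofFn] at ha
          obtain ⟨i, rfl⟩ := ha
          exact hω _
        have hval : ((sumWord φ (fun j _ => q j) w (π ω) : ℝ) : EReal) = 0 := by
          exact_mod_cast hsum
        exact le_iSup₂_of_le w ⟨hw1, hw2⟩ hval.ge
    apply le_antisymm
    · calc manePot φ (fun j _ => q j) (π ω) (π ω)
          ≤ Seps φ (fun j _ => q j) 1 (π ω) (π ω) := iInf₂_le 1 one_pos
        _ = 0 := hS 1 one_pos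
    · exact le_iInf₂ fun ε hε => (hS ε hε).ge
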